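/- Let m ≥ 1 and let z, z′ be two nondecreasing vectors in ℕ^m (0 ≤ z₁ ≤ … ≤ z_m and 0 ≤ z′₁ ≤ … ≤ z′_m) with z ≠ z′. Let j be the largest index at which z and z′ differ. Then pos(z) < pos(z′) if and only if z_j < z′_j, where pos(z) = Σ_{i=1}^m C(z_i + i − 1, i). -/

import Mathlib

/-!
This is the combinatorial number system. If `a₀ < a₁ < ⋯ < a_j`, the sum
`∑_{i<j} C(a_i, i+1)` is strictly less than `C(a_j, j)`, by induction with Pascal's rule.
With `a_i = z_i + i` (strictly increasing because `z` is nondecreasing), raising the entry at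
the last differing index `j` adds at least `C(z_j + j + 1, j + 1) - C(z_j + j, j + 1) = C(z_j + j, j)`,
which outweighs every possible change of the lower terms.
-/

open Finset

/-- The rank function `pos(z) = C(z₁,1) + C(z₂+1,2) + ⋯ + C(z_m+m-1,m)`,
with `z` zero-indexed so that the `i`-th term is `C(z i + i, i + 1)`. -/
def pos (m : ℕ) (z : Fin m → ℕ) : ℕ :=
  ∑ i : Fin m, Nat.choose (z i + (i : ℕ)) ((i : ℕ) + 1)

theorem sum_range_choose_lt_choose {a : ℕ → ℕ} {j : ℕ} (ha : ∀ i < j, a i < a (i + 1)) :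
    ∑ i ∈ range j, (a i).choose (i + 1) < (a j).choose j := by
  induction j with
  | zero => simp
  | succ n ih =>
    have hsum := ih fun i hi => ha i (Nat.lt_succ_of_lt hi)
    calc ∑ i ∈ range (n + 1), (a i).choose (i + 1)
        = ∑ i ∈ range n, (a i).choose (i + 1) + (a n).choose (n + 1) := sum_range_succ _ _
      _ < (a n).choose n + (a n).choose (n + 1) := by omega
      _ = (a n + 1).choose (n + 1) := (Nat.choose_succ_succ _ _).symm
      _ ≤ (a (n + 1)).choose (n + 1) := Nat.choose_le_choose _ (ha n n.lt_succ_self)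

theorem sum_range_choose_lt_sum_range_choose {a b : ℕ → ℕ} {m j : ℕ} (hjm : j < m)
    (ha : ∀ i < j, a i < a (i + 1)) (hlt : a j < b j) (htail : ∀ k ∈ Ico (j + 1) m, a k = b k) :
    ∑ k ∈ range m, (a k).choose (k + 1) < ∑ k ∈ range m, (b k).choose (k + 1) := by
  have hhead : ∑ k ∈ range (j + 1), (a k).choose (k + 1)
      < ∑ k ∈ range (j + 1), (b k).choose (k + 1) := by
    have hlow := sum_range_choose_lt_choose ha
    have hjump : (a j).choose j + (a j).choose (j + 1) ≤ (b j).choose (j + 1) := by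
      rw [← Nat.choose_succ_succ]
      exact Nat.choose_le_choose _ hlt
    rw [sum_range_succ, sum_range_succ]
    omega
  have htail_sum : ∑ k ∈ Ico (j + 1) m, (a k).choose (k + 1)
      = ∑ k ∈ Ico (j + 1) m, (b k).choose (k + 1) := sum_congr rfl fun k hk => by rw [htail k hk]
  have hjm' : j + 1 ≤ m := hjm
  rw [← sum_range_add_sum_Ico _ hjm', ← sum_range_add_sum_Ico _ hjm', htail_sum]
  omega

def zeroExtend {m : ℕ} (z : Fin m → ℕ) (k : ℕ) : ℕ :=
  if h : k < m then z ⟨k, h⟩ else 0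

theorem zeroExtend_val {m : ℕ} (z : Fin m → ℕ) (i : Fin m) : zeroExtend z i = z i := by
  simp [zeroExtend]

theorem pos_eq_sum_range {m : ℕ} (z : Fin m → ℕ) :
    pos m z = ∑ k ∈ range m, (zeroExtend z k + k).choose (k + 1) := by
  rw [pos, ← Fin.sum_univ_eq_sum_range (fun k => (zeroExtend z k + k).choose (k + 1))]
  simp only [zeroExtend_val]

theorem pos_lt_pos_of_lt {m : ℕ} {z z' : Fin m → ℕ} (hz : Monotone z) {j : Fin m}
    (hlt : z j < z' j) (hmax : ∀ i : Fin m, j < i → z i = z' i) : pos m z < pos m z' := by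
  rw [pos_eq_sum_range, pos_eq_sum_range]
  refine sum_range_choose_lt_sum_range_choose j.isLt (fun i hi => ?_) ?_ fun k hk => ?_
  · have hi1 : i + 1 < m := lt_of_le_of_lt hi j.isLt
    have hmono : z ⟨i, by omega⟩ ≤ z ⟨i + 1, hi1⟩ := hz (Fin.mk_le_mk.2 i.le_succ)
    simp only [zeroExtend, dif_pos hi1, dif_pos (show i < m by omega)]
    omega
  · simpa [zeroExtend_val] using hlt
  · obtain ⟨hjk, hkm⟩ := mem_Ico.1 hk
    simp only [zeroExtend, dif_pos hkm, hmax ⟨k, hkm⟩ (Fin.mk_lt_mk.2 hjk)]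

theorem stmt_2_general (m : ℕ) (z z' : Fin m → ℕ)
    (hz : Monotone z) (hz' : Monotone z')
    (j : Fin m) (hj : z j ≠ z' j) (hmax : ∀ i : Fin m, j < i → z i = z' i) :
    pos m z < pos m z' ↔ z j < z' j := by
  rcases hj.lt_or_gt with h | h
  · exact iff_of_true (pos_lt_pos_of_lt hz h hmax) h
  · exact iff_of_false (pos_lt_pos_of_lt hz' h fun i hi => (hmax i hi).symm).asymm h.asymm

/-- For nondecreasing `z ≠ z'` in `ℕ^m`, if `j` is the largest index at which they differ,
then `pos z < pos z'` iff `z j < z' j` (colexicographic monotonicity of `pos`). -/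
theorem stmt_2 (m : ℕ) (hm : 1 ≤ m) (z z' : Fin m → ℕ)
    (hz : Monotone z) (hz' : Monotone z') (hne : z ≠ z')
    (j : Fin m) (hj : z j ≠ z' j) (hmax : ∀ i : Fin m, j < i → z i = z' i) :
    pos m z < pos m z' ↔ z j < z' j :=
  stmt_2_general m z z' hz hz' j hj hmax
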